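/- arXiv:2504.05121 — 2 statements merged into one kernel-verified Lean document; each statement's English description precedes it below -/
import Mathlib

section
/- Let (X,f) be a topological dynamical system and L > 1. If f is L-Lipschitz, i.e., d(f(x),f(y)) ≤ L·d(x,y) for all x,y ∈ X, then h(f) ≤ dim_H(X) · log L, where dim_H denotes Hausdorff dimension. -/
open MeasureTheory ENNReal

/-!
Fix `s > dim_H X`, so that `μH[s] X = 0`. Then `X` is covered by finitely many open sets `B i`
of diameters `ρ i` with `∑ ρ i ^ s` as small as we like. Since `f` is `L`-Lipschitz, the
`f`-orbits of two points of `B i` stay `ε`-close for `m i ≈ log_L (ε / ρ i)` steps, and the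
weights satisfy `∑ (L ^ s) ^ (-m i) ≤ ∑ (ρ i / ε) ^ s ≤ 1 / 2`. Pulling back covers along
`f^[m i]` piece by piece, the least number `N n` of `(n, ε)`-small sets covering `X` satisfies
`N n ≤ ∑_{m i < n} N (n - m i) + #pieces`, whence `N n = O((L ^ s) ^ n)` and `h(f) ≤ s log L`.
-/

open Set Metric Dynamics ExpGrowth
open scoped Finset NNReal

namespace Dynamics

variable {X : Type*} {T : X → X} {F : Set X} {U : SetRel X X}

def IsDynSmall (T : X → X) (U : SetRel X X) (n : ℕ) (C : Set X) : Prop :=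
  C ×ˢ C ⊆ dynEntourage T U n

lemma isDynSmall_zero (C : Set X) : IsDynSmall T U 0 C :=
  fun _ _ ↦ mem_dynEntourage.2 fun _ hk ↦ absurd hk (Nat.not_lt_zero _)

lemma IsDynSmall.anti {m n : ℕ} {C : Set X} (h : IsDynSmall T U n C) (hmn : m ≤ n) :
    IsDynSmall T U m C :=
  h.trans (dynEntourage_antitone T U hmn)

lemma IsDynSmall.inter_preimage_iterate {m n : ℕ} {B D : Set X} (hB : IsDynSmall T U m B)
    (hD : IsDynSmall T U n D) : IsDynSmall T U (m + n) (B ∩ T^[m] ⁻¹' D) := by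
  rintro ⟨x, y⟩ ⟨⟨hxB, hxD⟩, hyB, hyD⟩
  refine mem_dynEntourage.2 fun k hk ↦ ?_
  rcases lt_or_ge k m with hkm | hmk
  · exact mem_dynEntourage.1 (hB ⟨hxB, hyB⟩) k hkm
  · obtain ⟨j, rfl⟩ := Nat.exists_eq_add_of_le hmk
    rw [add_comm, Function.iterate_add_apply, Function.iterate_add_apply]
    exact mem_dynEntourage.1 (hD ⟨hxD, hyD⟩) j (by omega)

lemma coverMincard_le_card_of_isDynSmall {n : ℕ} {𝒞 : Finset (Set X)} (hF : F ⊆ ⋃₀ ↑𝒞)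
    (h𝒞 : ∀ C ∈ 𝒞, IsDynSmall T U n C) : coverMincard T F U n ≤ #𝒞 := by
  classical
  rcases F.eq_empty_or_nonempty with rfl | ⟨x₀, -⟩
  · simp [coverMincard_empty]
  have : Nonempty X := ⟨x₀⟩
  refine (IsDynCoverOf.coverMincard_le_card
    (s := 𝒞.image fun C ↦ Classical.epsilon (· ∈ C)) fun x hx ↦ ?_).trans
    (by exact_mod_cast Finset.card_image_le)
  obtain ⟨C, hC, hxC⟩ := hF hx
  exact ⟨_, Finset.mem_image_of_mem _ hC, h𝒞 C hC ⟨hxC, Classical.epsilon_spec ⟨x, hxC⟩⟩⟩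

variable {ι : Type*} [Fintype ι] {B : ι → Set X} {m : ι → ℕ} {A : ℝ}

lemma exists_isDynSmall_cover_card_le (hF : MapsTo T F F) (hcov : F ⊆ ⋃ i, B i)
    (hB : ∀ i, IsDynSmall T U (m i) (B i)) (hA : 1 ≤ A) (hsum : ∑ i, (A ^ m i)⁻¹ ≤ 1 / 2)
    (n : ℕ) : ∃ 𝒞 : Finset (Set X), F ⊆ ⋃₀ ↑𝒞 ∧ (∀ C ∈ 𝒞, IsDynSmall T U n C) ∧
      (#𝒞 : ℝ) ≤ (2 * Fintype.card ι + 1) * A ^ n := by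
  classical
  have hm : ∀ i, 0 < m i := fun i ↦ Nat.pos_of_ne_zero fun h ↦ by
    have := (Finset.single_le_sum (fun j _ ↦ by positivity) (Finset.mem_univ i)).trans hsum
    norm_num [h] at this
  -- `c` is large enough for both `1 ≤ c` and `card ι + c * A ^ n / 2 ≤ c * A ^ n`
  set c : ℝ := 2 * Fintype.card ι + 1
  induction n using Nat.strong_induction_on with
  | _ n ih =>
  rcases n.eq_zero_or_pos with rfl | hn
  · exact ⟨{univ}, by simp, by simp [isDynSmall_zero], by simp [c]⟩
  choose 𝒟 h𝒟cov h𝒟small h𝒟card using fun i ↦ ih (n - m i) (by have := hm i; omega)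
  let child (i : ι) : Finset (Set X) :=
    if n ≤ m i then {B i} else (𝒟 i).image fun D ↦ B i ∩ T^[m i] ⁻¹' D
  refine ⟨Finset.univ.biUnion child, fun x hx ↦ ?_, fun C hC ↦ ?_, ?_⟩
  · obtain ⟨i, hxi⟩ := mem_iUnion.1 (hcov hx)
    by_cases h : n ≤ m i
    · exact ⟨B i, Finset.mem_biUnion.2 ⟨i, Finset.mem_univ i, by simp [child, h]⟩, hxi⟩
    · obtain ⟨D, hD, hxD⟩ := h𝒟cov i ((hF.iterate (m i)) hx)
      exact ⟨B i ∩ T^[m i] ⁻¹' D, Finset.mem_biUnion.2 ⟨i, Finset.mem_univ i,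
        by simp only [child, if_neg h]; exact Finset.mem_image_of_mem _ hD⟩, hxi, hxD⟩
  · obtain ⟨i, -, hCi⟩ := Finset.mem_biUnion.1 hC
    by_cases h : n ≤ m i
    · simp only [child, if_pos h, Finset.mem_singleton] at hCi
      exact hCi ▸ (hB i).anti h
    · simp only [child, if_neg h, Finset.mem_image] at hCi
      obtain ⟨D, hD, rfl⟩ := hCi
      have := (hB i).inter_preimage_iterate (h𝒟small i D hD)
      rwa [Nat.add_sub_cancel' (by omega)] at this
  · have hchild : ∀ i, (#(child i) : ℝ) ≤ 1 + c * A ^ n * (A ^ m i)⁻¹ := by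
      intro i
      by_cases h : n ≤ m i
      · simp only [child, if_pos h, Finset.card_singleton, Nat.cast_one]
        exact le_add_of_nonneg_right (by positivity)
      · simp only [child, if_neg h]
        calc (#((𝒟 i).image fun D ↦ B i ∩ T^[m i] ⁻¹' D) : ℝ) ≤ #(𝒟 i) := by
              exact_mod_cast Finset.card_image_le
          _ ≤ c * A ^ (n - m i) := h𝒟card i
          _ = c * A ^ n * (A ^ m i)⁻¹ := by rw [pow_sub₀ _ (by positivity) (by omega), mul_assoc]
          _ ≤ 1 + c * A ^ n * (A ^ m i)⁻¹ := le_add_of_nonneg_left zero_le_one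
    have hAn : 1 ≤ A ^ n := one_le_pow₀ hA
    calc (#(Finset.univ.biUnion child) : ℝ) ≤ ∑ i, (#(child i) : ℝ) := by
          exact_mod_cast Finset.card_biUnion_le
      _ ≤ ∑ i, (1 + c * A ^ n * (A ^ m i)⁻¹) := Finset.sum_le_sum fun i _ ↦ hchild i
      _ = Fintype.card ι + c * A ^ n * ∑ i, (A ^ m i)⁻¹ := by
          rw [Finset.sum_add_distrib, ← Finset.mul_sum]; simp
      _ ≤ Fintype.card ι + c * A ^ n * (1 / 2) := by gcongr
      _ ≤ c * A ^ n := by nlinarith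

lemma coverEntropyEntourage_le_log_of_sum_inv_pow_le (hF : MapsTo T F F)
    (hcov : F ⊆ ⋃ i, B i) (hB : ∀ i, IsDynSmall T U (m i) (B i)) (hA : 1 ≤ A)
    (hsum : ∑ i, (A ^ m i)⁻¹ ≤ 1 / 2) : coverEntropyEntourage T F U ≤ Real.log A := by
  have hbound : ∀ n, (coverMincard T F U n : ℝ≥0∞) ≤
      ENNReal.ofReal (2 * Fintype.card ι + 1) * ENNReal.ofReal A ^ n := fun n ↦ by
    obtain ⟨𝒞, h𝒞cov, h𝒞small, h𝒞card⟩ := exists_isDynSmall_cover_card_le hF hcov hB hA hsum n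
    calc (coverMincard T F U n : ℝ≥0∞) ≤ (#𝒞 : ℕ∞) :=
          ENat.toENNReal_mono (coverMincard_le_card_of_isDynSmall h𝒞cov h𝒞small)
      _ = ENNReal.ofReal #𝒞 := by simp
      _ ≤ ENNReal.ofReal ((2 * Fintype.card ι + 1) * A ^ n) := ofReal_le_ofReal h𝒞card
      _ = _ := by rw [ofReal_mul (by positivity), ofReal_pow (by positivity)]
  calc coverEntropyEntourage T F U ≤ expGrowthSup fun n ↦ ENNReal.ofReal A ^ n :=
        expGrowthSup_le_of_eventually_le ofReal_ne_top (.of_forall hbound)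
    _ = Real.log A := by rw [expGrowthSup_pow, log_ofReal_of_pos (by linarith)]

end Dynamics

lemma ENNReal.exists_pos_add_two_mul_rpow_lt {a ε : ℝ≥0∞} (ha : a ≠ ⊤) (hε : ε ≠ 0) {s : ℝ}
    (hs : 0 ≤ s) : ∃ η : ℝ≥0, 0 < η ∧ (a + 2 * η) ^ s < a ^ s + ε := by
  have hg : Continuous fun η : ℝ≥0 ↦ (a + 2 * (η : ℝ≥0∞)) ^ s :=
    ENNReal.continuous_rpow_const.comp (continuous_const.add
      ((ENNReal.continuous_const_mul ofNat_ne_top).comp continuous_coe))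
  have h₀ : (a + 2 * ((0 : ℝ≥0) : ℝ≥0∞)) ^ s < a ^ s + ε := by
    simpa using ENNReal.lt_add_right (rpow_ne_top_of_nonneg hs ha) hε
  obtain ⟨η, hη, hη₀⟩ := (((hg.tendsto 0).eventually (gt_mem_nhds h₀)).filter_mono
    nhdsWithin_le_nhds |>.and (self_mem_nhdsWithin (s := Ioi 0))).exists
  exact ⟨η, hη₀, hη⟩

namespace MeasureTheory

variable {X : Type*} [EMetricSpace X] [MeasurableSpace X] [BorelSpace X] {s : ℝ} {K : Set X}
  {δ : ℝ≥0∞}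

lemma exists_cover_tsum_ediam_rpow_lt (hs : 0 < s) (hK : μH[s] K = 0) (hδ : δ ≠ 0) :
    ∃ t : ℕ → Set X, K ⊆ ⋃ i, t i ∧ ∑' i, ediam (t i) ^ s < δ := by
  have h : (⨅ (t : ℕ → Set X) (_ : K ⊆ ⋃ n, t n) (_ : ∀ n, ediam (t n) ≤ ⊤),
      ∑' n, ⨆ _ : (t n).Nonempty, ediam (t n) ^ s) < δ := by
    refine lt_of_le_of_lt ?_ (pos_iff_ne_zero.2 hδ)
    rw [← hK, Measure.hausdorffMeasure_apply]
    exact le_iSup₂_of_le ⊤ zero_lt_top le_rfl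
  simp only [iInf_lt_iff] at h
  obtain ⟨t, hKt, -, ht⟩ := h
  refine ⟨t, hKt, lt_of_le_of_lt (ENNReal.tsum_le_tsum fun i ↦ ?_) ht⟩
  rcases (t i).eq_empty_or_nonempty with h | h
  · simp [h, zero_rpow_of_pos hs]
  · exact le_iSup_of_le h le_rfl

lemma exists_isOpen_cover_tsum_rpow_lt (hs : 0 < s) (hK : μH[s] K = 0) (hδ : δ ≠ 0) :
    ∃ (t : ℕ → Set X) (r : ℕ → ℝ≥0∞), (∀ i, IsOpen (t i) ∧ ediam (t i) ≤ r i ∧ r i ≠ 0) ∧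
      K ⊆ ⋃ i, t i ∧ ∑' i, r i ^ s < δ := by
  obtain ⟨t, hKt, ht⟩ := exists_cover_tsum_ediam_rpow_lt hs hK (ENNReal.half_pos hδ).ne'
  obtain ⟨ε, hε₀, hε⟩ := ENNReal.exists_pos_sum_of_countable (ENNReal.half_pos hδ).ne' ℕ
  have hfin : ∀ i, ediam (t i) ≠ ⊤ := fun i h ↦
    ne_top_of_le_ne_top ht.ne_top (ENNReal.le_tsum i) (by rw [h, top_rpow_of_pos hs])
  choose η hη₀ hη using fun i ↦
    ENNReal.exists_pos_add_two_mul_rpow_lt (hfin i) (coe_ne_zero.2 (hε₀ i).ne') hs.le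
  refine ⟨fun i ↦ thickening (η i) (t i), fun i ↦ ediam (t i) + 2 * η i,
    fun i ↦ ⟨isOpen_thickening, ediam_thickening_le _, by simp [(hη₀ i).ne']⟩,
    hKt.trans (iUnion_mono fun i ↦ self_subset_thickening (by exact_mod_cast hη₀ i) _), ?_⟩
  calc ∑' i, (ediam (t i) + 2 * η i) ^ s ≤ ∑' i, (ediam (t i) ^ s + ε i) :=
        ENNReal.tsum_le_tsum fun i ↦ (hη i).le
    _ = ∑' i, ediam (t i) ^ s + ∑' i, (ε i : ℝ≥0∞) := ENNReal.tsum_add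
    _ < δ / 2 + δ / 2 := ENNReal.add_lt_add ht hε
    _ = δ := ENNReal.add_halves δ

end MeasureTheory

lemma IsCompact.exists_finite_cover_sum_rpow_lt {X : Type*} [MetricSpace X] [MeasurableSpace X]
    [BorelSpace X] {K : Set X} (hK : IsCompact K) {s : ℝ} (hs : 0 < s) (hμ : μH[s] K = 0)
    {δ : ℝ} (hδ : 0 < δ) :
    ∃ (I : Finset ℕ) (t : ℕ → Set X) (ρ : ℕ → ℝ), K ⊆ ⋃ i ∈ I, t i ∧
      (∀ i, 0 < ρ i ∧ ∀ x ∈ t i, ∀ y ∈ t i, dist x y ≤ ρ i) ∧ ∑ i ∈ I, ρ i ^ s < δ := by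
  obtain ⟨t, r, ht, hKt, hr⟩ := exists_isOpen_cover_tsum_rpow_lt hs hμ (ofReal_pos.2 hδ).ne'
  obtain ⟨I, hI⟩ := hK.elim_finite_subcover t (fun i ↦ (ht i).1) hKt
  have hfin : ∀ i, r i ≠ ⊤ := fun i h ↦
    ne_top_of_le_ne_top hr.ne_top (ENNReal.le_tsum i) (by rw [h, top_rpow_of_pos hs])
  refine ⟨I, t, fun i ↦ (r i).toReal, hI,
    fun i ↦ ⟨toReal_pos (ht i).2.2 (hfin i), fun x hx y hy ↦ ?_⟩, ?_⟩
  · rw [dist_edist]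
    exact toReal_mono (hfin i) ((edist_le_ediam_of_mem hx hy).trans (ht i).2.1)
  · calc ∑ i ∈ I, (r i).toReal ^ s = (∑ i ∈ I, r i ^ s).toReal := by
          rw [toReal_sum fun i _ ↦ rpow_ne_top_of_nonneg hs.le (hfin i)]
          simp only [toReal_rpow]
      _ < δ := toReal_lt_of_lt_ofReal ((ENNReal.sum_le_tsum I).trans_lt hr)

lemma LipschitzWith.exists_isDynSmall_lt_pow_mul {X : Type*} [PseudoMetricSpace X] {f : X → X}
    {K : ℝ≥0} (hf : LipschitzWith K f) (hK : 1 < K) {B : Set X} {ρ ε : ℝ} (hρ : 0 < ρ)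
    (hρε : ρ ≤ ε) (hB : ∀ x ∈ B, ∀ y ∈ B, dist x y ≤ ρ) :
    ∃ m : ℕ, IsDynSmall f {p | dist p.1 p.2 ≤ ε} m B ∧ ε < K ^ m * ρ := by
  obtain ⟨n, hn, hn₁⟩ := exists_nat_pow_near ((one_le_div hρ).2 hρε) (show (1 : ℝ) < K from hK)
  refine ⟨n + 1, ?_, (div_lt_iff₀ hρ).1 hn₁⟩
  rintro ⟨x, y⟩ ⟨hx, hy⟩
  refine mem_dynEntourage.2 fun k hk ↦ ?_
  calc dist (f^[k] x) (f^[k] y) ≤ K ^ k * dist x y := by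
        simpa using (hf.iterate k).dist_le_mul x y
    _ ≤ K ^ n * ρ := by
        gcongr
        · exact_mod_cast hK.le
        · omega
        · exact hB x hx y hy
    _ ≤ ε := (le_div_iff₀ hρ).1 hn

lemma inv_rpow_pow_le_div_rpow {K ρ ε s : ℝ} {m : ℕ} (hK : 0 < K) (hρ : 0 ≤ ρ) (hε : 0 < ε)
    (hs : 0 ≤ s) (h : ε < K ^ m * ρ) : ((K ^ s) ^ m)⁻¹ ≤ ρ ^ s / ε ^ s := by
  rw [Real.rpow_pow_comm hK.le, le_div_iff₀ (by positivity), inv_mul_le_iff₀ (by positivity),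
    ← Real.mul_rpow (by positivity) hρ]
  exact Real.rpow_le_rpow hε.le h.le hs

lemma LipschitzWith.coverEntropyEntourage_le_of_hausdorffMeasure_eq_zero {X : Type*}
    [MetricSpace X] [CompactSpace X] [MeasurableSpace X] [BorelSpace X] {f : X → X} {K : ℝ≥0}
    (hf : LipschitzWith K f) (hK : 1 < K) {s : ℝ} (hs : 0 < s) (hμ : μH[s] (univ : Set X) = 0)
    {ε : ℝ} (hε : 0 < ε) :
    coverEntropyEntourage f univ {p : X × X | dist p.1 p.2 ≤ ε} ≤ (s * Real.log K : ℝ) := by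
  have hεs : 0 < ε ^ s := Real.rpow_pos_of_pos hε s
  obtain ⟨I, t, ρ, hcov, hρ, hsum⟩ :=
    isCompact_univ.exists_finite_cover_sum_rpow_lt hs hμ (half_pos hεs)
  have hρε : ∀ i ∈ I, ρ i ≤ ε := fun i hi ↦ by
    have hρs := (Finset.single_le_sum (fun j _ ↦ Real.rpow_nonneg (hρ j).1.le s) hi).trans_lt
      (hsum.trans (half_lt_self hεs))
    exact ((Real.rpow_lt_rpow_iff (hρ i).1.le hε.le hs).1 hρs).le
  choose m hm hmρ using fun i : I ↦
    hf.exists_isDynSmall_lt_pow_mul hK (hρ i).1 (hρε i i.2) (hρ i).2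
  have hK₀ : (0 : ℝ) < K := zero_lt_one.trans hK
  rw [← Real.log_rpow hK₀]
  refine coverEntropyEntourage_le_log_of_sum_inv_pow_le (mapsTo_univ f univ)
    (B := fun i : I ↦ t i) (fun x hx ↦ ?_) hm (Real.one_le_rpow (by exact_mod_cast hK.le) hs.le) ?_
  · obtain ⟨i, hi, hxi⟩ := mem_iUnion₂.1 (hcov hx)
    exact mem_iUnion.2 ⟨⟨i, hi⟩, hxi⟩
  · calc ∑ i : I, (((K : ℝ) ^ s) ^ m i)⁻¹ ≤ ∑ i : I, ρ i ^ s / ε ^ s :=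
          Finset.sum_le_sum fun i _ ↦ inv_rpow_pow_le_div_rpow hK₀ (hρ i).1.le hε hs.le (hmρ i)
      _ = (∑ i ∈ I, ρ i ^ s) / ε ^ s := by
          rw [← Finset.sum_div, Finset.sum_coe_sort I fun i ↦ ρ i ^ s]
      _ ≤ 1 / 2 := by rw [div_le_iff₀ hεs]; linarith

theorem entropy_le_dimH_mul_log_lipschitz_general
    {X : Type*} [MetricSpace X] [CompactSpace X]
    (f : X → X)
    (L : ℝ) (hL : 1 < L) (hlip : ∀ x y : X, dist (f x) (f y) ≤ L * dist x y) :
    Dynamics.coverEntropy f (Set.univ : Set X) ≤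
      ((dimH (Set.univ : Set X) * ENNReal.ofReal (Real.log L) : ℝ≥0∞) : EReal) := by
  borelize X
  have hlog : 0 < Real.log L := Real.log_pos hL
  obtain hdim | hdim := eq_or_ne (dimH (univ : Set X)) ⊤
  · simp [hdim, top_mul (ofReal_pos.2 hlog).ne']
  have hf : LipschitzWith ⟨L, by linarith⟩ f := .of_dist_le_mul hlip
  rw [← ofReal_toReal hdim, ← ofReal_mul toReal_nonneg, EReal.coe_ennreal_ofReal,
    max_eq_left (by positivity), coverEntropy_eq_iSup_basis uniformity_basis_dist_le]
  refine iSup₂_le fun ε hε ↦ EReal.le_of_forall_lt_iff_le.1 fun z hz ↦ ?_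
  have hs : (dimH (univ : Set X)).toReal < z / Real.log L :=
    (lt_div_iff₀ hlog).2 (EReal.coe_lt_coe_iff.1 hz)
  have hs₀ : 0 < z / Real.log L := toReal_nonneg.trans_lt hs
  have hμ : μH[z / Real.log L] (univ : Set X) = 0 := by
    have := hausdorffMeasure_of_dimH_lt ((lt_ofReal_iff_toReal_lt hdim).2 hs)
    rwa [Real.coe_toNNReal _ hs₀.le] at this
  have hent := hf.coverEntropyEntourage_le_of_hausdorffMeasure_eq_zero
    (show (1 : ℝ) < L from hL) hs₀ hμ hε
  exact hent.trans_eq (congrArg _ (div_mul_cancel₀ z hlog.ne'))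

theorem entropy_le_dimH_mul_log_lipschitz
    {X : Type*} [MetricSpace X] [CompactSpace X]
    (f : X → X) (hf : Continuous f) (hfs : Function.Surjective f)
    (L : ℝ) (hL : 1 < L) (hlip : ∀ x y : X, dist (f x) (f y) ≤ L * dist x y) :
    Dynamics.coverEntropy f (Set.univ : Set X) ≤
      ((dimH (Set.univ : Set X) * ENNReal.ofReal (Real.log L) : ℝ≥0∞) : EReal) :=
  entropy_le_dimH_mul_log_lipschitz_general f L hL hlip
end

section
/- Let (X,d) be a metric space with a convex metric (for all distinct x,y there is z with d(x,z) = d(z,y) = d(x,y)/2). If X is complete, then for every a,b ∈ X there exists an arc (homeomorphic image of [0,1]) from a to b whose 1-dimensional Hausdorff measure equals d(a,b). -/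
open MeasureTheory
open scoped ENNReal NNReal

/-- A metric is convex if every pair of distinct points has a midpoint. -/
def ConvexMetric (X : Type*) [MetricSpace X] : Prop :=
  ∀ x y : X, x ≠ y → ∃ z : X, dist x z = dist x y / 2 ∧ dist z y = dist x y / 2

section GeodesicAux

variable {X : Type*} [MetricSpace X]

open Classical in
noncomputable def geoMid (hconv : ConvexMetric X) (x y : X) : X :=
  if h : x = y then x else (hconv x y h).choose

lemma geoMid_dist_left (hconv : ConvexMetric X) (x y : X) :
    dist x (geoMid hconv x y) = dist x y / 2 := by
  unfold geoMid
  split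
  · subst ‹x = y›; simp
  · exact (hconv x y ‹_›).choose_spec.1

lemma geoMid_dist_right (hconv : ConvexMetric X) (x y : X) :
    dist (geoMid hconv x y) y = dist x y / 2 := by
  unfold geoMid
  split
  · subst ‹x = y›; simp
  · exact (hconv x y ‹_›).choose_spec.2

/-- Dyadic subdivision: `geoDy hconv a b n k` is the point at parameter `k / 2^n`. -/
noncomputable def geoDy (hconv : ConvexMetric X) (a b : X) : ℕ → ℕ → X
  | 0, k => if k = 0 then a else b
  | (n+1), k =>
      if k % 2 = 0 then geoDy hconv a b n (k / 2)
      else geoMid hconv (geoDy hconv a b n (k / 2)) (geoDy hconv a b n (k / 2 + 1))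

variable (hconv : ConvexMetric X) (a b : X)

lemma geoDy_zero (n : ℕ) : geoDy hconv a b n 0 = a := by
  induction n with
  | zero => simp [geoDy]
  | succ n ih => simpa [geoDy] using ih

lemma geoDy_top (n : ℕ) : geoDy hconv a b n (2 ^ n) = b := by
  induction n with
  | zero => simp [geoDy]
  | succ n ih =>
    have h1 : 2 ^ (n + 1) % 2 = 0 := by omega
    have h2 : 2 ^ (n + 1) / 2 = 2 ^ n := by omega
    simpa [geoDy, h1, h2] using ih

lemma geoDy_double (n k : ℕ) : geoDy hconv a b (n + 1) (2 * k) = geoDy hconv a b n k := by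
  have h1 : (2 * k) % 2 = 0 := by omega
  have h2 : (2 * k) / 2 = k := by omega
  simp [geoDy, h1, h2]

lemma geoDy_step : ∀ n k, k < 2 ^ n →
    dist (geoDy hconv a b n k) (geoDy hconv a b n (k + 1)) = dist a b / 2 ^ n := by
  intro n
  induction n with
  | zero =>
    intro k hk
    interval_cases k
    simp [geoDy]
  | succ n ih =>
    intro k hk
    rcases Nat.even_or_odd k with ⟨j, hj⟩ | ⟨j, hj⟩
    · subst hj
      have hj2 : j < 2 ^ n := by have := hk; rw [pow_succ] at this; omega
      have h1 : (j + j) % 2 = 0 := by omega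
      have h2 : (j + j) / 2 = j := by omega
      have h3 : (j + j + 1) % 2 = 1 := by omega
      have h4 : (j + j + 1) / 2 = j := by omega
      rw [show geoDy hconv a b (n+1) (j+j) = geoDy hconv a b n j by simp [geoDy, h1, h2],
        show geoDy hconv a b (n+1) (j+j+1) =
          geoMid hconv (geoDy hconv a b n j) (geoDy hconv a b n (j+1)) by
            simp [geoDy, h3, h4],
        geoMid_dist_left, ih j hj2, pow_succ]
      ring
    · subst hj
      have hj2 : j < 2 ^ n := by have := hk; rw [pow_succ] at this; omega
      have h3 : (2 * j + 1) % 2 = 1 := by omega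
      have h4 : (2 * j + 1) / 2 = j := by omega
      have h1 : (2 * j + 1 + 1) % 2 = 0 := by omega
      have h2 : (2 * j + 1 + 1) / 2 = j + 1 := by omega
      rw [show geoDy hconv a b (n+1) (2*j+1) =
          geoMid hconv (geoDy hconv a b n j) (geoDy hconv a b n (j+1)) by
            simp [geoDy, h3, h4],
        show geoDy hconv a b (n+1) (2*j+1+1) = geoDy hconv a b n (j+1) by
            simp [geoDy, h1, h2],
        geoMid_dist_right, ih j hj2, pow_succ]
      ring

lemma geoDy_dist_le (n : ℕ) : ∀ i j, i ≤ j → j ≤ 2 ^ n →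
    dist (geoDy hconv a b n i) (geoDy hconv a b n j) ≤
      ((j : ℝ) - i) * (dist a b / 2 ^ n) := by
  intro i j hij
  induction j, hij using Nat.le_induction with
  | base => intro _; simp
  | succ j hij ih =>
    intro hj
    have hjlt : j < 2 ^ n := hj
    calc dist (geoDy hconv a b n i) (geoDy hconv a b n (j + 1))
        ≤ dist (geoDy hconv a b n i) (geoDy hconv a b n j) +
          dist (geoDy hconv a b n j) (geoDy hconv a b n (j + 1)) := dist_triangle _ _ _
      _ ≤ ((j : ℝ) - i) * (dist a b / 2 ^ n) + dist a b / 2 ^ n := by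
          have := ih (le_of_lt hjlt)
          have := geoDy_step hconv a b n j hjlt
          linarith
      _ = (((j : ℝ) + 1) - i) * (dist a b / 2 ^ n) := by ring
      _ = (((j + 1 : ℕ) : ℝ) - i) * (dist a b / 2 ^ n) := by push_cast; ring

lemma geoDy_dist_eq (n i j : ℕ) (hij : i ≤ j) (hj : j ≤ 2 ^ n) :
    dist (geoDy hconv a b n i) (geoDy hconv a b n j) =
      ((j : ℝ) - i) * (dist a b / 2 ^ n) := by
  refine le_antisymm (geoDy_dist_le hconv a b n i j hij hj) ?_
  have h1 : dist (geoDy hconv a b n 0) (geoDy hconv a b n (2 ^ n)) = dist a b := by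
    rw [geoDy_zero, geoDy_top]
  have h2 : dist (geoDy hconv a b n 0) (geoDy hconv a b n (2 ^ n)) ≤
      dist (geoDy hconv a b n 0) (geoDy hconv a b n i) +
      dist (geoDy hconv a b n i) (geoDy hconv a b n j) +
      dist (geoDy hconv a b n j) (geoDy hconv a b n (2 ^ n)) :=
    dist_triangle4 _ _ _ _
  have h3 := geoDy_dist_le hconv a b n 0 i (Nat.zero_le _) (le_trans hij hj)
  have h4 := geoDy_dist_le hconv a b n j (2 ^ n) hj le_rfl
  have hpow : ((2 ^ n : ℕ) : ℝ) = (2 : ℝ) ^ n := by push_cast; ring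
  have h2n : (0 : ℝ) < 2 ^ n := by positivity
  rw [hpow] at h4
  have hd : dist a b = (2 : ℝ) ^ n * (dist a b / 2 ^ n) := by field_simp
  simp only [Nat.cast_zero, sub_zero] at h3
  have hjr : (j : ℝ) ≤ 2 ^ n := by exact_mod_cast hj
  nlinarith [h1, h2, h3, h4, hd]

lemma geoDy_dist_abs (n i j : ℕ) (hi : i ≤ 2 ^ n) (hj : j ≤ 2 ^ n) :
    dist (geoDy hconv a b n i) (geoDy hconv a b n j) =
      |(i : ℝ) - j| * (dist a b / 2 ^ n) := by
  rcases le_total i j with h | h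
  · have h' : (i : ℝ) ≤ j := Nat.cast_le.2 h
    rw [geoDy_dist_eq hconv a b n i j h hj, abs_sub_comm,
      abs_of_nonneg (sub_nonneg.2 h')]
  · have h' : (j : ℝ) ≤ i := Nat.cast_le.2 h
    rw [dist_comm, geoDy_dist_eq hconv a b n j i h hi,
      abs_of_nonneg (sub_nonneg.2 h')]

/-- The approximating sequence at parameter `t`. -/
noncomputable def geoSeq (hconv : ConvexMetric X) (a b : X) (t : ℝ) (n : ℕ) : X :=
  geoDy hconv a b n ⌊t * 2 ^ n⌋₊

lemma geoSeq_floor_le {t : ℝ} (ht : t ∈ Set.Icc (0 : ℝ) 1) (n : ℕ) :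
    ⌊t * 2 ^ n⌋₊ ≤ 2 ^ n := by
  have : t * 2 ^ n ≤ ((2 ^ n : ℕ) : ℝ) := by
    push_cast
    nlinarith [ht.1, ht.2, (by positivity : (0:ℝ) < (2:ℝ) ^ n)]
  calc ⌊t * 2 ^ n⌋₊ ≤ ⌊((2 ^ n : ℕ) : ℝ)⌋₊ := Nat.floor_mono this
    _ = 2 ^ n := Nat.floor_natCast _

lemma geoSeq_cauchy {t : ℝ} (ht : t ∈ Set.Icc (0 : ℝ) 1) :
    CauchySeq (geoSeq hconv a b t) := by
  apply cauchySeq_of_le_geometric (1/2) (dist a b) (by norm_num)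
  intro n
  set k := ⌊t * 2 ^ n⌋₊ with hk
  set m := ⌊t * 2 ^ (n + 1)⌋₊ with hm
  have hkle : k ≤ 2 ^ n := geoSeq_floor_le ht n
  have hmle : m ≤ 2 ^ (n + 1) := geoSeq_floor_le ht (n + 1)
  have ht0 : 0 ≤ t := ht.1
  have hps : (2 : ℝ) ^ (n + 1) = 2 * 2 ^ n := by ring
  have hfl : (k : ℝ) ≤ t * 2 ^ n := Nat.floor_le (mul_nonneg ht0 (by positivity))
  have hfu : t * 2 ^ n < k + 1 := Nat.lt_floor_add_one _
  have h2k : 2 * k ≤ m := by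
    apply Nat.le_floor
    push_cast
    nlinarith
  have hm2 : m ≤ 2 * k + 1 := by
    have h1 : t * 2 ^ (n + 1) < ((2 * k + 2 : ℕ) : ℝ) := by push_cast; nlinarith
    have := (Nat.floor_lt (mul_nonneg ht0 (by positivity))).2 h1
    omega
  have heq : geoDy hconv a b n k = geoDy hconv a b (n + 1) (2 * k) :=
    (geoDy_double hconv a b n k).symm
  show dist (geoDy hconv a b n k) (geoDy hconv a b (n + 1) m) ≤ _
  rw [heq, geoDy_dist_abs hconv a b (n + 1) (2 * k) m (by omega) hmle]
  have habs : |((2 * k : ℕ) : ℝ) - m| ≤ 1 := by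
    have h1 : ((2 * k : ℕ) : ℝ) ≤ m := by exact_mod_cast h2k
    have h2 : (m : ℝ) ≤ ((2 * k + 1 : ℕ) : ℝ) := by exact_mod_cast hm2
    rw [abs_le]
    push_cast at h1 h2 ⊢
    constructor <;> linarith
  have hpos : (0 : ℝ) ≤ dist a b / 2 ^ (n + 1) := by positivity
  calc |((2 * k : ℕ) : ℝ) - m| * (dist a b / 2 ^ (n + 1))
      ≤ 1 * (dist a b / 2 ^ (n + 1)) := mul_le_mul_of_nonneg_right habs hpos
    _ ≤ dist a b * (1 / 2) ^ n := by
        rw [one_mul, div_pow, one_pow, mul_one_div, hps]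
        have h2n : (0:ℝ) < 2 ^ n := by positivity
        rw [div_le_div_iff₀ (by positivity) h2n]
        nlinarith [dist_nonneg (x := a) (y := b)]

lemma geoSeq_exists_lim [CompleteSpace X] {t : ℝ} (ht : t ∈ Set.Icc (0 : ℝ) 1) :
    ∃ x : X, Filter.Tendsto (geoSeq hconv a b t) Filter.atTop (nhds x) :=
  cauchySeq_tendsto_of_complete (geoSeq_cauchy hconv a b ht)

/-- The geodesic parametrization. -/
noncomputable def geoFun [CompleteSpace X] (t : Set.Icc (0 : ℝ) 1) : X :=
  (geoSeq_exists_lim hconv a b t.2).choose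

lemma geoFun_tendsto [CompleteSpace X] (t : Set.Icc (0 : ℝ) 1) :
    Filter.Tendsto (geoSeq hconv a b t.1) Filter.atTop (nhds (geoFun hconv a b t)) :=
  (geoSeq_exists_lim hconv a b t.2).choose_spec

lemma floor_div_tendsto {t : ℝ} (ht : t ∈ Set.Icc (0 : ℝ) 1) :
    Filter.Tendsto (fun n : ℕ => (⌊t * 2 ^ n⌋₊ : ℝ) / 2 ^ n) Filter.atTop (nhds t) := by
  have hlo : ∀ n : ℕ, t - (1/2) ^ n ≤ (⌊t * 2 ^ n⌋₊ : ℝ) / 2 ^ n := by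
    intro n
    have h2n : (0 : ℝ) < 2 ^ n := by positivity
    rw [div_pow, one_pow, sub_le_iff_le_add, ← sub_le_iff_le_add']
    rw [le_div_iff₀ h2n, sub_mul, div_mul_cancel₀ _ (ne_of_gt h2n)]
    have := Nat.lt_floor_add_one (t * 2 ^ n)
    linarith
  have hhi : ∀ n : ℕ, (⌊t * 2 ^ n⌋₊ : ℝ) / 2 ^ n ≤ t := by
    intro n
    have h2n : (0 : ℝ) < 2 ^ n := by positivity
    rw [div_le_iff₀ h2n]
    exact Nat.floor_le (mul_nonneg ht.1 (by positivity))
  have hl : Filter.Tendsto (fun n : ℕ => t - (1/2 : ℝ) ^ n) Filter.atTop (nhds t) := by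
    have : Filter.Tendsto (fun n : ℕ => ((1:ℝ)/2) ^ n) Filter.atTop (nhds 0) :=
      tendsto_pow_atTop_nhds_zero_of_lt_one (by norm_num) (by norm_num)
    simpa using Filter.Tendsto.sub tendsto_const_nhds this
  exact tendsto_of_tendsto_of_tendsto_of_le_of_le hl tendsto_const_nhds hlo hhi

lemma geoFun_dist [CompleteSpace X] (s t : Set.Icc (0 : ℝ) 1) :
    dist (geoFun hconv a b s) (geoFun hconv a b t) = |s.1 - t.1| * dist a b := by
  have h1 : Filter.Tendsto
      (fun n => dist (geoSeq hconv a b s.1 n) (geoSeq hconv a b t.1 n)) Filter.atTop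
      (nhds (dist (geoFun hconv a b s) (geoFun hconv a b t))) :=
    (geoFun_tendsto hconv a b s).dist (geoFun_tendsto hconv a b t)
  have heq : ∀ n, dist (geoSeq hconv a b s.1 n) (geoSeq hconv a b t.1 n) =
      |(⌊s.1 * 2 ^ n⌋₊ : ℝ) / 2 ^ n - (⌊t.1 * 2 ^ n⌋₊ : ℝ) / 2 ^ n| * dist a b := by
    intro n
    have h2n : (0 : ℝ) < 2 ^ n := by positivity
    rw [geoSeq, geoSeq,
      geoDy_dist_abs hconv a b n _ _ (geoSeq_floor_le s.2 n) (geoSeq_floor_le t.2 n)]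
    rw [div_sub_div_same, abs_div, abs_of_pos h2n]
    ring
  have h2 : Filter.Tendsto
      (fun n => dist (geoSeq hconv a b s.1 n) (geoSeq hconv a b t.1 n)) Filter.atTop
      (nhds (|s.1 - t.1| * dist a b)) := by
    simp only [heq]
    exact (((floor_div_tendsto s.2).sub (floor_div_tendsto t.2)).abs).mul_const _
  exact tendsto_nhds_unique h1 h2

lemma geoFun_zero [CompleteSpace X] :
    geoFun hconv a b ⟨0, by norm_num⟩ = a := by
  have h := geoFun_tendsto hconv a b ⟨0, by norm_num⟩
  have : geoSeq hconv a b (0 : ℝ) = fun _ => a := by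
    funext n; simp [geoSeq, geoDy_zero]
  rw [this] at h
  exact tendsto_nhds_unique h tendsto_const_nhds

lemma geoFun_one [CompleteSpace X] :
    geoFun hconv a b ⟨1, by norm_num⟩ = b := by
  have h := geoFun_tendsto hconv a b ⟨1, by norm_num⟩
  have : geoSeq hconv a b (1 : ℝ) = fun _ => b := by
    funext n
    have h1 : (1 : ℝ) * 2 ^ n = ((2 ^ n : ℕ) : ℝ) := by push_cast; ring
    rw [geoSeq, h1, Nat.floor_natCast, geoDy_top]
  rw [this] at h
  exact tendsto_nhds_unique h tendsto_const_nhds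

end GeodesicAux

theorem exists_geodesic_arc_of_convex_metric
    {X : Type*} [MetricSpace X] [CompleteSpace X]
    [MeasurableSpace X] [BorelSpace X]
    (hconv : ConvexMetric X) (a b : X) (hab : a ≠ b) :
    ∃ γ : Set.Icc (0 : ℝ) 1 → X, Continuous γ ∧ Function.Injective γ ∧
      γ ⟨0, by norm_num⟩ = a ∧ γ ⟨1, by norm_num⟩ = b ∧
      μH[1] (Set.range γ) = ENNReal.ofReal (dist a b) := by
  set γ := geoFun hconv a b with hγ
  have hdist : ∀ s t : Set.Icc (0:ℝ) 1, dist (γ s) (γ t) = |s.1 - t.1| * dist a b :=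
    geoFun_dist hconv a b
  have hd0 : (0 : ℝ) < dist a b := dist_pos.2 hab
  have h0 : γ ⟨0, by norm_num⟩ = a := geoFun_zero hconv a b
  have hga : ∀ t : Set.Icc (0:ℝ) 1, dist a (γ t) = t.1 * dist a b := by
    intro t
    calc dist a (γ t) = dist (γ ⟨0, by norm_num⟩) (γ t) := by rw [h0]
      _ = |(0:ℝ) - t.1| * dist a b := hdist _ t
      _ = t.1 * dist a b := by rw [zero_sub, abs_neg, abs_of_nonneg t.2.1]
  refine ⟨γ, ?_, ?_, h0, geoFun_one hconv a b, ?_⟩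
  · -- continuity
    have hlip : LipschitzWith (Real.toNNReal (dist a b)) γ := by
      apply LipschitzWith.of_dist_le_mul
      intro s t
      rw [hdist s t, Subtype.dist_eq, Real.dist_eq,
        Real.coe_toNNReal _ dist_nonneg]
      exact le_of_eq (mul_comm _ _)
    exact hlip.continuous
  · -- injectivity
    intro s t h
    have h1 := hdist s t
    rw [h, dist_self] at h1
    have h2 : |s.1 - t.1| = 0 := by
      rcases mul_eq_zero.1 h1.symm with h' | h'
      · exact h'
      · exact absurd h' (ne_of_gt hd0)
    exact Subtype.ext (sub_eq_zero.1 (abs_eq_zero.1 h2))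
  · -- Hausdorff measure
    set proj : ℝ → Set.Icc (0:ℝ) 1 := fun t => ⟨max 0 (min 1 t), by
      constructor
      · exact le_max_left _ _
      · simp only [max_le_iff]
        exact ⟨zero_le_one, min_le_left _ _⟩⟩ with hproj
    set γe : ℝ → X := fun t => γ (proj t) with hγe
    have hproj_eq : ∀ t (ht : t ∈ Set.Icc (0:ℝ) 1), proj t = ⟨t, ht⟩ := by
      intro t ht
      apply Subtype.ext
      simp only [hproj]
      rw [min_eq_right ht.2, max_eq_right ht.1]
    have hγe_eq : ∀ t (ht : t ∈ Set.Icc (0:ℝ) 1), γe t = γ ⟨t, ht⟩ := by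
      intro t ht
      simp only [hγe]
      rw [hproj_eq t ht]
    have hrange : Set.range γ = γe '' Set.Icc (0:ℝ) 1 := by
      ext x
      constructor
      · rintro ⟨t, rfl⟩
        exact ⟨t.1, t.2, hγe_eq t.1 t.2⟩
      · rintro ⟨t, ht, rfl⟩
        exact ⟨⟨t, ht⟩, (hγe_eq t ht).symm⟩
    apply le_antisymm
    · -- upper bound via Lipschitz
      rw [hrange]
      have hlip : LipschitzOnWith (Real.toNNReal (dist a b)) γe (Set.Icc (0:ℝ) 1) := by
        apply LipschitzOnWith.of_dist_le_mul
        intro s hs t ht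
        rw [hγe_eq s hs, hγe_eq t ht, hdist, Real.dist_eq,
          Real.coe_toNNReal _ dist_nonneg]
        exact le_of_eq (mul_comm _ _)
      have hub := hlip.hausdorffMeasure_image_le (d := 1) zero_le_one
      rw [MeasureTheory.hausdorffMeasure_real, Real.volume_Icc] at hub
      refine le_trans hub ?_
      rw [ENNReal.rpow_one]
      simp [ENNReal.ofReal]
    · -- lower bound via dist a ·
      have hf : LipschitzWith 1 (fun x : X => dist a x) := LipschitzWith.dist_right a
      have himg : (fun x : X => dist a x) '' Set.range γ = Set.Icc 0 (dist a b) := by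
        ext r
        constructor
        · rintro ⟨x, ⟨t, rfl⟩, rfl⟩
          show dist a (γ t) ∈ Set.Icc 0 (dist a b)
          rw [hga t]
          exact ⟨mul_nonneg t.2.1 dist_nonneg, by nlinarith [t.2.1, t.2.2]⟩
        · rintro ⟨hr0, hr1⟩
          have htmem : r / dist a b ∈ Set.Icc (0:ℝ) 1 :=
            ⟨div_nonneg hr0 hd0.le, (div_le_one hd0).2 hr1⟩
          refine ⟨γ ⟨r / dist a b, htmem⟩, Set.mem_range_self _, ?_⟩
          show dist a (γ ⟨r / dist a b, htmem⟩) = r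
          rw [hga]
          exact div_mul_cancel₀ _ (ne_of_gt hd0)
      have hle := hf.hausdorffMeasure_image_le (d := 1) zero_le_one (Set.range γ)
      rw [himg, MeasureTheory.hausdorffMeasure_real, Real.volume_Icc] at hle
      simpa using hle
end
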